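/- (Generalized Nikiforov bound.) Let G be a finite simple graph on n vertices with at least one edge and chromatic number χ. Then for every m with 1 ≤ m ≤ n: Σ_{i=1}^m μ_i ≤ (χ − 1)·Σ_{i=1}^m (θ_i − μ_i). -/

import Mathlib

/-!
Fix a proper colouring `c : V → Fin χ`, let `ω = exp (2πi / χ)` and `D = diag (ω ^ c v)`.
Summing the conjugates `D ^ s * L * (D ^ s)ᴴ` over `s < χ` multiplies the entry `(u, v)` of
`L` by `∑ s, (ω ^ c u / ω ^ c v) ^ s`, which vanishes unless `c u = c v`; since no edge joins
two vertices of the same colour, the sum is `χ` times the degree matrix `L + A`. Take for `W` an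
orthonormal frame of eigenvectors of `A` for `μ₁, …, μₘ` and compare the traces of
`Wᴴ * _ * W`: the term `s = 0` is `tr (Wᴴ L W) ≥ 0`, and each of the other `χ - 1` terms is at
most `θ₁ + ⋯ + θₘ` by Ky Fan's maximum principle, because `(D ^ s)ᴴ * W` is again orthonormal.
Hence `χ (tr (Wᴴ L W) + ∑ μᵢ) ≤ tr (Wᴴ L W) + (χ - 1) ∑ θᵢ`, so `χ ∑ μᵢ ≤ (χ - 1) ∑ θᵢ`.
-/

open Matrix Finset
open scoped ComplexOrder

lemma Fin.sum_filter_val_lt_eq_sum_castLE {M : Type*} [AddCommMonoid M] {n m : ℕ} (h : m ≤ n)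
    (f : Fin n → M) :
    ∑ i ∈ univ.filter (fun i : Fin n => (i : ℕ) < m), f i = ∑ j : Fin m, f (Fin.castLE h j) := by
  have : univ.filter (fun i : Fin n => (i : ℕ) < m) = univ.map (Fin.castLEEmb h) := by
    ext i
    simp [Fin.ext_iff, Fin.exists_iff]
  rw [this, sum_map]
  rfl

lemma sum_mul_le_sum_filter_val_lt_of_antitone {n m : ℕ} {θ p : Fin n → ℝ} (hθ : Antitone θ)
    (hp0 : ∀ i, 0 ≤ p i) (hp1 : ∀ i, p i ≤ 1) (hps : ∑ i, p i = m) :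
    ∑ i, θ i * p i ≤ ∑ i ∈ univ.filter (fun i : Fin n => (i : ℕ) < m), θ i := by
  rcases Nat.eq_zero_or_pos m with rfl | hm
  · have hp : ∀ i, p i = 0 := by
      simpa [Finset.sum_eq_zero_iff_of_nonneg fun i _ => hp0 i] using hps
    simp [hp]
  have hmn : m ≤ n := by
    have : ∑ i, p i ≤ ∑ _i : Fin n, (1 : ℝ) := Finset.sum_le_sum fun i _ => hp1 i
    simp only [hps, sum_const, card_univ, Fintype.card_fin, nsmul_eq_mul, mul_one] at this
    exact_mod_cast this
  -- `t` separates the `m` largest values of `θ` from the others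
  set t := θ ⟨m - 1, by omega⟩
  have hpoint : ∀ i, θ i * p i ≤ (if (i : ℕ) < m then θ i - t else 0) + t * p i := by
    intro i
    split_ifs with hi
    · have : t ≤ θ i := hθ (Fin.mk_le_mk.2 (by omega))
      nlinarith [hp1 i]
    · have : θ i ≤ t := hθ (Fin.mk_le_mk.2 (by omega))
      nlinarith [hp0 i]
  calc ∑ i, θ i * p i
      ≤ ∑ i : Fin n, ((if (i : ℕ) < m then θ i - t else 0) + t * p i) :=
        sum_le_sum fun i _ => hpoint i
    _ = ∑ i ∈ univ.filter (fun i : Fin n => (i : ℕ) < m), θ i := by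
      rw [sum_add_distrib, ← sum_filter, ← mul_sum, hps, sum_sub_distrib, sum_const,
        Fin.card_filter_val_lt, min_eq_right hmn, nsmul_eq_mul]
      ring

section Trace

variable {𝕜 : Type*} [RCLike 𝕜] {ι : Type*} [Fintype ι] [DecidableEq ι]

lemma posSemidef_one_sub_mul_conjTranspose {n : Type*} [Fintype n] [DecidableEq n]
    {Y : Matrix n ι 𝕜} (hY : Yᴴ * Y = 1) : (1 - Y * Yᴴ).PosSemidef := by
  have hidem : Y * Yᴴ * (Y * Yᴴ) = Y * Yᴴ := by
    rw [Matrix.mul_assoc, ← Matrix.mul_assoc Yᴴ, hY, Matrix.one_mul]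
  have : 1 - Y * Yᴴ = (1 - Y * Yᴴ)ᴴ * (1 - Y * Yᴴ) := by
    simp only [conjTranspose_sub, conjTranspose_one, conjTranspose_mul,
      conjTranspose_conjTranspose, Matrix.sub_mul, Matrix.mul_sub, Matrix.one_mul,
      Matrix.mul_one, hidem]
    abel
  rw [this]
  exact posSemidef_conjTranspose_mul_self _

lemma exists_re_trace_conjTranspose_mul_mul_eq_sum {n : Type*} [Fintype n] [DecidableEq n]
    {M U : Matrix n n 𝕜} (hU : U ∈ unitaryGroup n 𝕜) {f : n → ℝ}
    (hMU : Uᴴ * M * U = diagonal (fun i => (f i : 𝕜))) {W : Matrix n ι 𝕜} (hW : Wᴴ * W = 1) :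
    ∃ p : n → ℝ, (∀ i, 0 ≤ p i) ∧ (∀ i, p i ≤ 1) ∧ ∑ i, p i = Fintype.card ι ∧
      RCLike.re (trace (Wᴴ * M * W)) = ∑ i, f i * p i := by
  have hUU : U * Uᴴ = 1 := mem_unitaryGroup_iff.1 hU
  set Y := Uᴴ * W
  have hWY : W = U * Y := by rw [← Matrix.mul_assoc, hUU, Matrix.one_mul]
  have hY : Yᴴ * Y = 1 := by
    rw [conjTranspose_mul, conjTranspose_conjTranspose, Matrix.mul_assoc, ← Matrix.mul_assoc U,
      hUU, Matrix.one_mul, hW]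
  have htr : trace (Wᴴ * M * W) = trace (diagonal (fun i => (f i : 𝕜)) * (Y * Yᴴ)) := by
    rw [← hMU, hWY, conjTranspose_mul]
    simp only [Matrix.mul_assoc]
    rw [trace_mul_comm]
    simp only [Matrix.mul_assoc]
  have hdiag (i : n) : 0 ≤ (Y * Yᴴ) i i := (posSemidef_self_mul_conjTranspose Y).diag_nonneg
  have hdiag' (i : n) : 0 ≤ (1 - Y * Yᴴ : Matrix n n 𝕜) i i :=
    (posSemidef_one_sub_mul_conjTranspose hY).diag_nonneg
  refine ⟨fun i => RCLike.re ((Y * Yᴴ) i i), fun i => (RCLike.nonneg_iff.1 (hdiag i)).1,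
    fun i => ?_, ?_, ?_⟩
  · simpa using (RCLike.nonneg_iff.1 (hdiag' i)).1
  · have htrY : trace (Y * Yᴴ) = Fintype.card ι := by rw [trace_mul_comm, hY, trace_one]
    simpa [Matrix.trace] using congrArg RCLike.re htrY
  · rw [htr, trace, map_sum RCLike.re]
    simp [diagonal_mul]

/-- Ky Fan's maximum principle. -/
theorem re_trace_conjTranspose_mul_mul_le_sum {n : ℕ} {M U : Matrix (Fin n) (Fin n) 𝕜}
    (hU : U ∈ unitaryGroup (Fin n) 𝕜) {f : Fin n → ℝ}
    (hMU : Uᴴ * M * U = diagonal (fun i => (f i : 𝕜))) {e : Equiv.Perm (Fin n)}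
    (hf : Antitone (f ∘ e)) {W : Matrix (Fin n) ι 𝕜} (hW : Wᴴ * W = 1) :
    RCLike.re (trace (Wᴴ * M * W)) ≤
      ∑ i ∈ univ.filter (fun i : Fin n => (i : ℕ) < Fintype.card ι), f (e i) := by
  obtain ⟨p, hp0, hp1, hps, htr⟩ := exists_re_trace_conjTranspose_mul_mul_eq_sum hU hMU hW
  rw [htr, ← Equiv.sum_comp e]
  exact sum_mul_le_sum_filter_val_lt_of_antitone hf (fun i => hp0 _) (fun i => hp1 _)
    (by rwa [Equiv.sum_comp e])

lemma re_trace_conjTranspose_mul_mul_nonneg {n : Type*} [Fintype n] [DecidableEq n]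
    {M U : Matrix n n 𝕜} (hU : U ∈ unitaryGroup n 𝕜) {f : n → ℝ}
    (hMU : Uᴴ * M * U = diagonal (fun i => (f i : 𝕜))) (hf : 0 ≤ f) {W : Matrix n ι 𝕜}
    (hW : Wᴴ * W = 1) : 0 ≤ RCLike.re (trace (Wᴴ * M * W)) := by
  obtain ⟨p, hp0, -, -, htr⟩ := exists_re_trace_conjTranspose_mul_mul_eq_sum hU hMU hW
  rw [htr]
  exact sum_nonneg fun i _ => mul_nonneg (hf i) (hp0 i)

lemma exists_conjTranspose_mul_self_eq_one_and_re_trace_eq_sum {n : Type*} [Fintype n]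
    [DecidableEq n] {M U : Matrix n n 𝕜} (hU : U ∈ unitaryGroup n 𝕜) {f : n → ℝ}
    (hMU : Uᴴ * M * U = diagonal (fun i => (f i : 𝕜))) (g : ι ↪ n) :
    ∃ W : Matrix n ι 𝕜, Wᴴ * W = 1 ∧ RCLike.re (trace (Wᴴ * M * W)) = ∑ j, f (g j) := by
  refine ⟨U.submatrix id g, ?_, ?_⟩
  · rw [conjTranspose_submatrix, ← submatrix_mul _ _ _ _ _ Function.bijective_id,
      ← star_eq_conjTranspose, mem_unitaryGroup_iff'.1 hU, submatrix_one_embedding]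
  · rw [conjTranspose_submatrix, ← submatrix_id_id M,
      ← submatrix_mul _ _ _ _ _ Function.bijective_id,
      ← submatrix_mul _ _ _ _ _ Function.bijective_id, hMU, submatrix_diagonal_embedding,
      trace_diagonal, map_sum]
    simp

end Trace

lemma Matrix.IsHermitian.exists_unitary_conjTranspose_mul_map_ofReal_mul_eq_diagonal
    {n : Type*} [Fintype n] [DecidableEq n] {M : Matrix n n ℝ} (hM : M.IsHermitian) :
    ∃ U ∈ unitaryGroup n ℂ,
      Uᴴ * M.map Complex.ofRealHom * U = diagonal (fun i => (hM.eigenvalues i : ℂ)) := by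
  set U₀ : Matrix n n ℝ := ↑hM.eigenvectorUnitary
  have hconj : Function.Semiconj Complex.ofRealHom star star :=
    fun x => (Complex.conj_ofReal x).symm
  have hdiag : star U₀ * M * U₀ = diagonal hM.eigenvalues := by
    simpa [Unitary.conjStarAlgAut_apply] using hM.conjStarAlgAut_star_eigenvectorUnitary
  refine ⟨U₀.map Complex.ofRealHom, ?_, ?_⟩
  · rw [mem_unitaryGroup_iff', star_eq_conjTranspose, ← conjTranspose_map _ hconj,
      ← Matrix.map_mul, ← star_eq_conjTranspose, Unitary.coe_star_mul_self]
    exact Matrix.map_one _ Complex.ofReal_zero Complex.ofReal_one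
  · rw [← conjTranspose_map _ hconj, ← Matrix.map_mul, ← Matrix.map_mul,
      ← star_eq_conjTranspose, hdiag, diagonal_map (map_zero _)]
    rfl

namespace SimpleGraph

variable {V : Type*} (G : SimpleGraph V) [DecidableRel G.Adj] {R S : Type*} [Ring R] [Ring S]

lemma map_adjMatrix (f : R →+* S) : (G.adjMatrix R).map f = G.adjMatrix S := by
  ext u v
  simp [adjMatrix_apply, apply_ite f]

lemma map_lapMatrix [Fintype V] [DecidableEq V] (f : R →+* S) :
    (G.lapMatrix R).map f = G.lapMatrix S := by
  ext u v
  by_cases huv : u = v <;> simp [lapMatrix, degMatrix, adjMatrix_apply, huv, apply_ite f]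

end SimpleGraph

section ColorPhase

variable {V : Type*} [Fintype V] [DecidableEq V] {k : ℕ} {ω : ℂ}

def colorPhase (ω : ℂ) (c : V → Fin k) : Matrix V V ℂ :=
  diagonal fun v => ω ^ (c v : ℕ)

lemma colorPhase_mem_unitaryGroup (hω : IsPrimitiveRoot ω k) (c : V → Fin k) :
    colorPhase ω c ∈ unitaryGroup V ℂ := by
  rw [mem_unitaryGroup_iff, colorPhase, star_eq_conjTranspose, diagonal_conjTranspose,
    diagonal_mul_diagonal, ← diagonal_one]
  congr 1
  ext v
  rw [Pi.star_apply, star_pow, ← mul_pow, Complex.star_def, Complex.mul_conj,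
    Complex.normSq_eq_norm_sq, hω.norm'_eq_one (c v).pos.ne']
  simp

lemma sum_pow_colorPhase_mul_mul_star_apply (hω : IsPrimitiveRoot ω k) (c : V → Fin k)
    (M : Matrix V V ℂ) (u v : V) :
    (∑ s ∈ range k, colorPhase ω c ^ s * M * star (colorPhase ω c ^ s)) u v =
      if c u = c v then k * M u v else 0 := by
  have hk : k ≠ 0 := (c u).pos.ne'
  have hω0 : ω ≠ 0 := hω.ne_zero hk
  have hstar (a : ℕ) : star (ω ^ a) = (ω ^ a)⁻¹ := by
    rw [Complex.inv_eq_conj (by simp [hω.norm'_eq_one hk])]; rfl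
  set ζ := ω ^ (c u : ℕ) * (ω ^ (c v : ℕ))⁻¹
  have hentry (s : ℕ) :
      (colorPhase ω c ^ s * M * star (colorPhase ω c ^ s)) u v = ζ ^ s * M u v := by
    simp only [colorPhase, diagonal_pow, star_eq_conjTranspose, diagonal_conjTranspose,
      mul_diagonal, diagonal_mul, Pi.star_apply, Pi.pow_apply, star_pow, hstar, ζ]
    ring
  rw [Matrix.sum_apply, sum_congr rfl fun s _ => hentry s, ← sum_mul]
  split_ifs with h
  · simp [ζ, h, hω0]
  · have hζ1 : ζ ≠ 1 := fun hζ =>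
      h (Fin.ext (hω.pow_inj (c u).2 (c v).2 (mul_inv_eq_one₀ (pow_ne_zero _ hω0) |>.1 hζ)))
    have hζk : ζ ^ k = 1 := by
      have hroot (a : ℕ) : (ω ^ a) ^ k = 1 := by rw [pow_right_comm, hω.pow_eq_one, one_pow]
      rw [mul_pow, inv_pow, hroot, hroot, inv_one, mul_one]
    rw [geom_sum_eq hζ1, hζk, sub_self, zero_div, zero_mul]

theorem SimpleGraph.Coloring.sum_pow_colorPhase_mul_lapMatrix_mul_star {G : SimpleGraph V}
    [DecidableRel G.Adj] (hω : IsPrimitiveRoot ω k) (C : G.Coloring (Fin k)) :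
    ∑ s ∈ range k, colorPhase ω C ^ s * G.lapMatrix ℂ * star (colorPhase ω C ^ s) =
      (k : ℂ) • G.degMatrix ℂ := by
  ext u v
  rw [sum_pow_colorPhase_mul_mul_star_apply hω]
  by_cases huv : u = v
  · subst huv
    simp [lapMatrix, degMatrix]
  · have hadj : C u = C v → ¬ G.Adj u v := fun hc hadj => C.valid hadj hc
    by_cases hc : C u = C v <;>
      simp [lapMatrix, degMatrix, huv, hc, hadj]

end ColorPhase

theorem SimpleGraph.Coloring.mul_re_trace_adjMatrix_le {n : ℕ} {G : SimpleGraph (Fin n)}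
    [DecidableRel G.Adj] {k : ℕ} (hk : 0 < k) (C : G.Coloring (Fin k))
    (hL : (G.lapMatrix ℝ).IsHermitian) {e : Equiv.Perm (Fin n)}
    (he : Antitone (hL.eigenvalues ∘ e)) {ι : Type*} [Fintype ι] [DecidableEq ι]
    {W : Matrix (Fin n) ι ℂ} (hW : Wᴴ * W = 1) :
    k * RCLike.re (trace (Wᴴ * G.adjMatrix ℂ * W)) ≤
      (k - 1) * ∑ i ∈ univ.filter (fun i : Fin n => (i : ℕ) < Fintype.card ι),
        hL.eigenvalues (e i) := by
  obtain ⟨U, hU, hLU⟩ := hL.exists_unitary_conjTranspose_mul_map_ofReal_mul_eq_diagonal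
  rw [G.map_lapMatrix] at hLU
  set D := colorPhase (Complex.exp (2 * Real.pi * Complex.I / k)) C
  have hω := Complex.isPrimitiveRoot_exp k hk.ne'
  set T : Matrix (Fin n) (Fin n) ℂ → ℝ := fun X => RCLike.re (trace (Wᴴ * X * W))
  set Θ := ∑ i ∈ univ.filter (fun i : Fin n => (i : ℕ) < Fintype.card ι), hL.eigenvalues (e i)
  have hsum : ∑ s ∈ range k, T (D ^ s * G.lapMatrix ℂ * star (D ^ s)) =
      k * (T (G.lapMatrix ℂ) + T (G.adjMatrix ℂ)) := by
    have hdeg : G.degMatrix ℂ = G.lapMatrix ℂ + G.adjMatrix ℂ := (sub_add_cancel _ _).symm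
    simp only [T, ← map_sum, ← trace_sum, ← Matrix.mul_sum, ← Matrix.sum_mul]
    rw [C.sum_pow_colorPhase_mul_lapMatrix_mul_star hω, hdeg, Matrix.mul_smul, Matrix.smul_mul,
      trace_smul, Matrix.mul_add, Matrix.add_mul, trace_add]
    simp
  have hle (s : ℕ) : T (D ^ s * G.lapMatrix ℂ * star (D ^ s)) ≤ Θ := by
    have hDW : (star (D ^ s) * W)ᴴ * (star (D ^ s) * W) = 1 := by
      have hDs : D ^ s ∈ unitaryGroup (Fin n) ℂ := pow_mem (colorPhase_mem_unitaryGroup hω C) s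
      rw [conjTranspose_mul, ← star_eq_conjTranspose, star_star, Matrix.mul_assoc,
        ← Matrix.mul_assoc (D ^ s), mem_unitaryGroup_iff.1 hDs, Matrix.one_mul, hW]
    convert re_trace_conjTranspose_mul_mul_le_sum (f := hL.eigenvalues) hU hLU he hDW
      using 2
    simp only [conjTranspose_mul, ← star_eq_conjTranspose, star_star, Matrix.mul_assoc]
  have hT0 : 0 ≤ T (G.lapMatrix ℂ) :=
    re_trace_conjTranspose_mul_mul_nonneg (f := hL.eigenvalues) hU hLU
      (G.posSemidef_lapMatrix ℝ).eigenvalues_nonneg hW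
  obtain ⟨k, rfl⟩ : ∃ j, k = j + 1 := Nat.exists_eq_succ_of_ne_zero hk.ne'
  have hrest : ∑ s ∈ range k, T (D ^ (s + 1) * G.lapMatrix ℂ * star (D ^ (s + 1))) ≤ k * Θ := by
    simpa using sum_le_card_nsmul (range k) _ Θ fun s _ => hle (s + 1)
  rw [sum_range_succ', pow_zero, star_one, Matrix.one_mul, Matrix.mul_one] at hsum
  push_cast at hsum ⊢
  linarith [mul_nonneg k.cast_nonneg hT0]

theorem stmt_9_general {n : ℕ} (G : SimpleGraph (Fin n)) [DecidableRel G.Adj]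
    (χ : ℕ) (hχ : G.chromaticNumber = (χ : ℕ∞))
    (hA : (G.adjMatrix ℝ).IsHermitian)
    (hL : (G.lapMatrix ℝ).IsHermitian)
    (μ θ : Fin n → ℝ)
    (hμ : ∃ e : Equiv.Perm (Fin n), μ = hA.eigenvalues ∘ e)
    (hθa : Antitone θ) (hθ : ∃ e : Equiv.Perm (Fin n), θ = hL.eigenvalues ∘ e)
    (m : ℕ) (hm1 : 1 ≤ m) (hmn : m ≤ n) :
    (∑ i ∈ Finset.univ.filter (fun i : Fin n => (i : ℕ) < m), μ i) ≤
      ((χ : ℝ) - 1) * (∑ i ∈ Finset.univ.filter (fun i : Fin n => (i : ℕ) < m), (θ i - μ i)) := by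
  obtain ⟨eμ, rfl⟩ := hμ
  obtain ⟨eθ, rfl⟩ := hθ
  obtain ⟨C⟩ : G.Colorable χ := SimpleGraph.chromaticNumber_le_iff_colorable.1 hχ.le
  have hχ0 : 0 < χ := (C ⟨0, by omega⟩).pos
  obtain ⟨U, hU, hAU⟩ := hA.exists_unitary_conjTranspose_mul_map_ofReal_mul_eq_diagonal
  rw [G.map_adjMatrix] at hAU
  obtain ⟨W, hW, htr⟩ := exists_conjTranspose_mul_self_eq_one_and_re_trace_eq_sum
    (f := hA.eigenvalues) hU hAU ((Fin.castLEEmb hmn).trans eμ.toEmbedding)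
  have key := C.mul_re_trace_adjMatrix_le hχ0 hL hθa hW
  rw [htr, Fintype.card_fin] at key
  rw [sum_sub_distrib]
  simp only [Function.comp_apply, Fin.sum_filter_val_lt_eq_sum_castLE hmn,
    Function.Embedding.trans_apply, Fin.coe_castLEEmb, Equiv.coe_toEmbedding] at key ⊢
  linarith

/-- **Generalized Nikiforov bound.** For a finite simple graph `G` on `n` vertices with at
least one edge and chromatic number `χ`, for every `1 ≤ m ≤ n`:
`Σ_{i=1}^m μ_i ≤ (χ - 1)·Σ_{i=1}^m (θ_i - μ_i)`.
Here `μ` and `θ` are the non-increasing enumerations of the eigenvalues of the adjacency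
matrix and of the Laplacian matrix, respectively. -/
theorem stmt_9 {n : ℕ} (hn : 0 < n) (G : SimpleGraph (Fin n)) [DecidableRel G.Adj]
    (he : ∃ v w : Fin n, G.Adj v w)
    (χ : ℕ) (hχ : G.chromaticNumber = (χ : ℕ∞))
    (hA : (G.adjMatrix ℝ).IsHermitian)
    (hL : (G.lapMatrix ℝ).IsHermitian)
    (μ θ : Fin n → ℝ)
    (hμa : Antitone μ) (hμ : ∃ e : Equiv.Perm (Fin n), μ = hA.eigenvalues ∘ e)
    (hθa : Antitone θ) (hθ : ∃ e : Equiv.Perm (Fin n), θ = hL.eigenvalues ∘ e)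
    (m : ℕ) (hm1 : 1 ≤ m) (hmn : m ≤ n) :
    (∑ i ∈ Finset.univ.filter (fun i : Fin n => (i : ℕ) < m), μ i) ≤
      ((χ : ℝ) - 1) * (∑ i ∈ Finset.univ.filter (fun i : Fin n => (i : ℕ) < m), (θ i - μ i)) :=
  stmt_9_general G χ hχ hA hL μ θ hμ hθa hθ m hm1 hmn
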